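/- arXiv:2108.02617 — 3 statements merged into one kernel-verified Lean document; each statement's English description precedes it below -/
import Mathlib

section
/- Fix n ≥ 2 and let (α₀, α₁, ..., α_{k-1}) with k = n(n+1)/2 be the sequence of vectors (2e₁, e₁+e₂, 2e₂, e₁+e₃, e₂+e₃, 2e₃, ..., e₁+eₙ, ..., e_{n-1}+eₙ, 2eₙ) in ℤⁿ (i.e., the blocks for m = 1,...,n consist of e₁+eₘ, e₂+eₘ, ..., e_{m-1}+eₘ, 2eₘ). Define a sequence of weights by λ⁰ = λ and, for 0 ≤ ℓ < k: if αₗ = e_p + e_q with p ≠ q and (λ^ℓ)_p ≠ (λ^ℓ)_q, set λ^{ℓ+1} = λ^ℓ + αₗ; otherwise set λ^{ℓ+1} = λ^ℓ. Then for any λ ∈ ℤⁿ with λ₁ = λ₂ and λ₂ < λ₃ < λ₄ < ... < λₙ, the final weight satisfies λ^k = λ + (n-1)ωₙ - e₁ - e₂, where ωₙ = e₁ + e₂ + ... + eₙ. -/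
/-- The sequence of odd reflections/inclusions `(α₀, ..., α_{k-1})`, encoded as
pairs `(p, m)` with `p ≤ m`: the pair `(p, m)` with `p < m` encodes
`αₗ = e_p + e_m`, and `(m, m)` encodes `αₗ = 2e_m`.  The blocks for
`m = 1, ..., n` are `e₁+eₘ, ..., e_{m-1}+eₘ, 2eₘ`. -/
def oddPairs (n : ℕ) : List (Fin n × Fin n) :=
  (List.finRange n).flatMap fun m =>
    (((List.finRange n).filter (fun p => p < m)).map (fun p => (p, m))) ++ [(m, m)]

/-- The rule of change of the highest weight under one odd reflection or
inclusion: if `αₗ = e_p + e_q` with `p ≠ q` and `λ_p ≠ λ_q`, then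
`λ ↦ λ + e_p + e_q`, otherwise `λ` is unchanged. -/
def oddStep {n : ℕ} (l : Fin n → ℤ) (pq : Fin n × Fin n) : Fin n → ℤ :=
  if pq.1 ≠ pq.2 ∧ l pq.1 ≠ l pq.2 then
    l + Pi.single pq.1 1 + Pi.single pq.2 1
  else l

/-! ### Auxiliary definitions and lemmas -/

lemma range_filter_lt : ∀ (n k : ℕ), k ≤ n → (List.range n).filter (fun a => a < k) = List.range k := by
  intro n
  induction n with
  | zero => intro k hk; interval_cases k; simp
  | succ n ih =>
    intro k hk
    rw [List.range_succ, List.filter_append]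
    rcases Nat.lt_or_ge k (n+1) with h | h
    · have hkn : k ≤ n := by omega
      rw [ih k hkn]
      simp [Nat.not_lt.mpr hkn]
    · have hk1 : k = n + 1 := by omega
      subst hk1
      rw [List.filter_eq_self.mpr (by intro a ha; simp at ha ⊢; omega)]
      simp [List.range_succ]

lemma finRange_map_val (n : ℕ) : (List.finRange n).map Fin.val = List.range n := by
  simp [List.finRange_eq_pmap_range, List.map_pmap]

lemma flatMap_finRange {α : Type} (n : ℕ) (f : ℕ → List α) :
    ((List.finRange n).flatMap fun m : Fin n => f (m : ℕ)) = (List.range n).flatMap f := by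
  rw [List.flatMap_def, List.flatMap_def,
    show (fun m : Fin n => f m.val) = f ∘ Fin.val from rfl, ← List.map_map, finRange_map_val]

/-- ℕ-valued version of a block of `oddPairs`. -/
def blockN (m : ℕ) : List (ℕ × ℕ) := ((List.range m).map fun p => (p, m)) ++ [(m, m)]

/-- ℕ-valued version of `oddPairs`. -/
def pairsN (n : ℕ) : List (ℕ × ℕ) := (List.range n).flatMap blockN

lemma map_oddPairs (n : ℕ) :
    (oddPairs n).map (fun pq => ((pq.1 : ℕ), (pq.2 : ℕ))) = pairsN n := by
  unfold oddPairs pairsN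
  rw [List.map_flatMap]
  have h1 : ∀ m : Fin n,
      ((((List.finRange n).filter (fun p => p < m)).map (fun p => (p, m))) ++ [(m, m)]).map
        (fun pq : Fin n × Fin n => ((pq.1 : ℕ), (pq.2 : ℕ))) = blockN (m : ℕ) := by
    intro m
    rw [List.map_append, List.map_map]
    have h2 : ((List.finRange n).filter (fun p => p < m)).map Fin.val = List.range (m : ℕ) := by
      have he : (fun p : Fin n => decide (p < m)) = (fun a : ℕ => decide (a < (m : ℕ))) ∘ Fin.val := rfl
      rw [show ((List.finRange n).filter (fun p => p < m)) =
          (List.finRange n).filter ((fun a : ℕ => decide (a < (m : ℕ))) ∘ Fin.val) from by rw [← he],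
        ← List.filter_map, finRange_map_val, range_filter_lt _ _ (le_of_lt m.isLt)]
    have h3 : ((List.finRange n).filter (fun p => p < m)).map
          ((fun pq : Fin n × Fin n => ((pq.1 : ℕ), (pq.2 : ℕ))) ∘ (fun p => (p, m)))
        = (List.range (m : ℕ)).map (fun a => (a, (m : ℕ))) := by
      rw [show ((fun pq : Fin n × Fin n => ((pq.1 : ℕ), (pq.2 : ℕ))) ∘ (fun p : Fin n => (p, m)))
          = (fun a : ℕ => (a, (m : ℕ))) ∘ Fin.val from rfl, ← List.map_map, h2]
    rw [h3]
    simp [blockN]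
  simp only [h1]
  exact flatMap_finRange n blockN

lemma pairsN_len (n : ℕ) : (pairsN n).length * 2 = n * (n + 1) := by
  induction n with
  | zero => simp [pairsN]
  | succ n ih =>
    have h : pairsN (n+1) = pairsN n ++ blockN n := by
      simp [pairsN, List.range_succ]
    rw [h, List.length_append]
    have hb : (blockN n).length = n + 1 := by simp [blockN]
    rw [hb]
    nlinarith [ih]

/-- Natural number to `Fin n`. -/
def finc {n : ℕ} (hn : 0 < n) (a : ℕ) : Fin n := ⟨a % n, Nat.mod_lt _ hn⟩

/-- ℕ-valued version of `oddStep`. -/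
def stepN {n : ℕ} (hn : 0 < n) (b : Fin n → ℤ) (pq : ℕ × ℕ) : Fin n → ℤ :=
  oddStep b (finc hn pq.1, finc hn pq.2)

/-- The weight after processing the first `M` blocks. -/
def tw {n : ℕ} (l : Fin n → ℤ) (M : ℕ) : Fin n → ℤ :=
  fun i => l i + (if (i : ℕ) < 2 then (M : ℤ) - 2 else if (i : ℕ) < M then (M : ℤ) - 1 else 0)

lemma finc_eq {n : ℕ} (hn : 0 < n) (a : ℕ) (h : a < n) : finc hn a = ⟨a, h⟩ :=
  Fin.ext (Nat.mod_eq_of_lt h)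

lemma chain {n : ℕ} (l : Fin n → ℤ)
    (hinc : ∀ k : Fin n, 1 ≤ (k : ℕ) → ∀ h : (k : ℕ) + 1 < n, l k < l ⟨(k : ℕ) + 1, h⟩) :
    ∀ (d : ℕ) (i j : Fin n), 1 ≤ (i : ℕ) → (j : ℕ) = (i : ℕ) + d →
    l i + d ≤ l j := by
  intro d
  induction d with
  | zero =>
    intro i j hi hj
    have : j = i := Fin.ext (by omega)
    subst this; simp
  | succ d ih =>
    intro i j hi hj
    have hjn := j.isLt
    have hlt : (i : ℕ) + d + 1 < n := by omega
    have h1 : l i + d ≤ l ⟨(i : ℕ) + d, by omega⟩ := ih i ⟨(i : ℕ) + d, by omega⟩ hi rfl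
    have h2 := hinc ⟨(i : ℕ) + d, by omega⟩ (by simp; omega) hlt
    have hje : j = ⟨(i : ℕ) + d + 1, hlt⟩ := Fin.ext (by show (j : ℕ) = (i : ℕ) + d + 1; omega)
    rw [hje]
    push_cast
    linarith

lemma keyP {n : ℕ} (hn : 2 ≤ n) (l : Fin n → ℤ)
    (h12 : l ⟨0, Nat.zero_lt_two.trans_le hn⟩ = l ⟨1, Nat.one_lt_two.trans_le hn⟩)
    (hinc : ∀ k : Fin n, 1 ≤ (k : ℕ) → ∀ h : (k : ℕ) + 1 < n, l k < l ⟨(k : ℕ) + 1, h⟩)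
    (M : ℕ) (hM2 : 2 ≤ M) (hMn : M < n) (P : ℕ) (hP : P < M) :
    l ⟨P, by omega⟩ + (if P < 2 then (M : ℤ) - 2 else (M : ℤ) - 1) < l ⟨M, hMn⟩ + P := by
  rcases Nat.lt_or_ge P 2 with h | h
  · have hc := chain l hinc (M - 1) ⟨1, by omega⟩ ⟨M, hMn⟩ (by simp) (by simp; omega)
    have hcast : ((M - 1 : ℕ) : ℤ) = (M : ℤ) - 1 := by
      push_cast [Nat.cast_sub (by omega : 1 ≤ M)]; ring
    rw [hcast] at hc
    interval_cases P
    · simp only [if_pos (by omega : (0:ℕ) < 2)]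
      have h0 : l (⟨0, by omega⟩ : Fin n) = l ⟨1, by omega⟩ := h12
      push_cast
      linarith
    · simp only [if_pos (by omega : (1:ℕ) < 2)]
      push_cast
      linarith
  · have hc := chain l hinc (M - P) ⟨P, by omega⟩ ⟨M, hMn⟩ (by simp; omega) (by simp; omega)
    have hcast : ((M - P : ℕ) : ℤ) = (M : ℤ) - P := by
      push_cast [Nat.cast_sub (by omega : P ≤ M)]; ring
    rw [hcast] at hc
    rw [if_neg (by omega)]
    linarith

lemma block_fold {n : ℕ} (hn : 2 ≤ n) (hn0 : 0 < n) (l : Fin n → ℤ)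
    (h12 : l ⟨0, Nat.zero_lt_two.trans_le hn⟩ = l ⟨1, Nat.one_lt_two.trans_le hn⟩)
    (hinc : ∀ k : Fin n, 1 ≤ (k : ℕ) → ∀ h : (k : ℕ) + 1 < n, l k < l ⟨(k : ℕ) + 1, h⟩)
    (M : ℕ) (hM2 : 2 ≤ M) (hMn : M < n) :
    ∀ P, P ≤ M → (((List.range P).map fun p => (p, M)).foldl (stepN hn0) (tw l M)) =
      fun i => tw l M i + (if (i : ℕ) < P then 1 else 0) + (if (i : ℕ) = M then (P : ℤ) else 0) := by
  intro P
  induction P with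
  | zero => intro _; funext i; simp
  | succ P ih =>
    intro hP1
    have hPM : P < M := by omega
    have hPn : P < n := by omega
    rw [List.range_succ, List.map_append, List.foldl_append, ih (by omega)]
    simp only [List.map_cons, List.map_nil, List.foldl_cons, List.foldl_nil]
    set h : Fin n → ℤ := fun i => tw l M i + (if (i : ℕ) < P then 1 else 0) +
      (if (i : ℕ) = M then (P : ℤ) else 0) with hh
    have hvP : ((⟨P, hPn⟩ : Fin n) : ℕ) = P := rfl
    have hvM : ((⟨M, hMn⟩ : Fin n) : ℕ) = M := rfl
    unfold stepN oddStep
    rw [finc_eq hn0 P hPn, finc_eq hn0 M hMn]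
    have htwP : h ⟨P, hPn⟩ = l ⟨P, hPn⟩ + (if P < 2 then (M : ℤ) - 2 else (M : ℤ) - 1) := by
      simp only [hh, tw, hvP]
      rw [if_neg (lt_irrefl P), if_neg (show ¬ P = M by omega)]
      by_cases h2 : P < 2
      · rw [if_pos h2, if_pos h2]; ring
      · rw [if_neg h2, if_neg h2, if_pos hPM]; ring
    have htwM : h ⟨M, hMn⟩ = l ⟨M, hMn⟩ + (P : ℤ) := by
      simp only [hh, tw, hvM]
      rw [if_neg (show ¬ M < 2 by omega), if_neg (lt_irrefl M),
        if_neg (show ¬ M < P by omega)]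
      simp
    have hkey := keyP hn l h12 hinc M hM2 hMn P hPM
    have hne1 : (⟨P, hPn⟩ : Fin n) ≠ ⟨M, hMn⟩ := by
      simp only [ne_eq, Fin.mk.injEq]; omega
    rw [if_pos ⟨hne1, by rw [htwP, htwM]; exact ne_of_lt hkey⟩]
    funext i
    simp only [hh, Pi.add_apply, Pi.single_apply, Fin.ext_iff, hvP, hvM]
    split_ifs <;> first | (push_cast; ring1) | (exfalso; omega)

lemma step_diag {n : ℕ} (hn0 : 0 < n) (b : Fin n → ℤ) (m : ℕ) : stepN hn0 b (m, m) = b := by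
  unfold stepN oddStep
  rw [if_neg]
  rintro ⟨h, -⟩
  exact h rfl

lemma main_fold {n : ℕ} (hn : 2 ≤ n) (hn0 : 0 < n) (l : Fin n → ℤ)
    (h12 : l ⟨0, Nat.zero_lt_two.trans_le hn⟩ = l ⟨1, Nat.one_lt_two.trans_le hn⟩)
    (hinc : ∀ k : Fin n, 1 ≤ (k : ℕ) → ∀ h : (k : ℕ) + 1 < n, l k < l ⟨(k : ℕ) + 1, h⟩) :
    ∀ M, 2 ≤ M → M ≤ n → ((List.range M).flatMap blockN).foldl (stepN hn0) l = tw l M := by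
  intro M hM2
  induction M, hM2 using Nat.le_induction with
  | base =>
    intro _
    have hlist : (List.range 2).flatMap blockN = [(0,0), (0,1), (1,1)] := by
      simp [blockN, List.range_succ]
    rw [hlist]
    simp only [List.foldl_cons, List.foldl_nil, step_diag]
    have e2 : stepN hn0 l (0, 1) = l := by
      unfold stepN oddStep
      rw [if_neg]
      rintro ⟨-, h⟩
      apply h
      rw [finc_eq hn0 0 (by omega), finc_eq hn0 1 (by omega)]
      exact h12
    rw [e2]
    funext i
    simp only [tw]
    split_ifs <;> norm_num
  | succ M hM2 ih =>
    intro hMn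
    have hMn' : M < n := by omega
    rw [List.range_succ, List.flatMap_append, List.foldl_append, ih (by omega)]
    have hsing : [M].flatMap blockN = ((List.range M).map fun p => (p, M)) ++ [(M, M)] := by
      simp [blockN]
    rw [hsing, List.foldl_append, block_fold hn hn0 l h12 hinc M hM2 hMn' M le_rfl]
    simp only [List.foldl_cons, List.foldl_nil, step_diag]
    funext i
    simp only [tw]
    have hiv := i.isLt
    split_ifs <;> first | (push_cast; ring1) | (exfalso; omega)

/-- the sequence has length `k = n(n+1)/2`, and for `λ ∈ ℤⁿ` with
`λ₁ = λ₂` and `λ₂ < λ₃ < ⋯ < λₙ`, the final weight is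
`λ + (n-1)ωₙ - e₁ - e₂`. -/
theorem odd_reflection_chain {n : ℕ} (hn : 2 ≤ n) (l : Fin n → ℤ)
    (h12 : l ⟨0, by omega⟩ = l ⟨1, by omega⟩)
    (hinc : ∀ k : Fin n, 1 ≤ (k : ℕ) → ∀ h : (k : ℕ) + 1 < n,
      l k < l ⟨(k : ℕ) + 1, h⟩) :
    (oddPairs n).length = n * (n + 1) / 2 ∧
    (oddPairs n).foldl oddStep l =
      fun i => l i + ((n : ℤ) - 1)
        - (if (i : ℕ) = 0 then 1 else 0)
        - (if (i : ℕ) = 1 then 1 else 0) := by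
  have hn0 : 0 < n := by omega
  constructor
  · have hlen : (oddPairs n).length = (pairsN n).length := by
      rw [← map_oddPairs n, List.length_map]
    have h2 := pairsN_len n
    rw [hlen, ← h2]
    omega
  · have hconv : (oddPairs n).foldl oddStep l = (pairsN n).foldl (stepN hn0) l := by
      rw [← map_oddPairs n, List.foldl_map]
      have hfun : (fun (b : Fin n → ℤ) (a : Fin n × Fin n) =>
          stepN hn0 b ((a.1 : ℕ), (a.2 : ℕ))) = oddStep := by
        funext b a
        unfold stepN
        have e1 : finc hn0 (a.1 : ℕ) = a.1 := Fin.ext (Nat.mod_eq_of_lt a.1.isLt)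
        have e2 : finc hn0 (a.2 : ℕ) = a.2 := Fin.ext (Nat.mod_eq_of_lt a.2.isLt)
        rw [e1, e2]
      rw [hfun]
    rw [hconv]
    have hmain := main_fold hn hn0 l h12 hinc n hn le_rfl
    rw [show pairsN n = (List.range n).flatMap blockN from rfl, hmain]
    funext i
    simp only [tw]
    have hiv := i.isLt
    split_ifs <;> first | (push_cast; ring1) | (exfalso; omega)
end

section
/- Let R be a ring and let 0 → S → E → M → 0 be a non-split short exact sequence of R-modules with S simple and with M having a unique maximal (proper) submodule. Then E has a unique maximal submodule; equivalently, E has a simple top E/rad(E). -/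
/-- if `0 → S → E → M → 0` is a non-split short exact sequence
of modules over a ring `R` with `S` simple and `M` having a unique maximal
proper submodule, then `E` has a unique maximal proper submodule (i.e. `E` has
simple top). -/
theorem simple_top_of_nonsplit_ext {R : Type*} [Ring R]
    {S E M : Type*} [AddCommGroup S] [Module R S]
    [AddCommGroup E] [Module R E] [AddCommGroup M] [Module R M]
    (f : S →ₗ[R] E) (g : E →ₗ[R] M)
    (hf : Function.Injective f) (hg : Function.Surjective g)
    (hexact : LinearMap.range f = LinearMap.ker g)
    (hnonsplit : ¬∃ h : M →ₗ[R] E, g.comp h = LinearMap.id)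
    (hS : IsSimpleModule R S)
    (hM : ∃! N : Submodule R M, IsCoatom N) :
    ∃! N : Submodule R E, IsCoatom N := by
  obtain ⟨N₀, hN₀, huniq⟩ := hM
  -- range f is an atom
  have hSrange : IsSimpleModule R (LinearMap.range f) :=
    IsSimpleModule.congr (LinearEquiv.ofInjective f hf).symm
  have hatom : IsAtom (LinearMap.range f) := by
    rwa [isSimpleModule_iff_isAtom] at hSrange
  -- key: every coatom of E contains ker g
  have key : ∀ N : Submodule R E, IsCoatom N → LinearMap.ker g ≤ N := by
    intro N hN
    rw [← hexact]
    by_contra hle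
    -- then N is a complement of range f = ker g, giving a splitting
    have hsup : N ⊔ LinearMap.range f = ⊤ := hN.2 _ (left_lt_sup.mpr hle)
    have hinf : N ⊓ LinearMap.range f = ⊥ := by
      rcases lt_or_eq_of_le (inf_le_right : N ⊓ LinearMap.range f ≤ LinearMap.range f) with h | h
      · exact hatom.2 _ h
      · exact absurd (h ▸ inf_le_left) hle
    set g' : N →ₗ[R] M := g.comp N.subtype with hg'
    have hinj : Function.Injective g' := by
      rw [← LinearMap.ker_eq_bot, LinearMap.ker_eq_bot']
      intro x hx
      have hx1 : (x : E) ∈ N ⊓ LinearMap.range f :=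
        Submodule.mem_inf.mpr ⟨x.2, by rw [hexact]; exact hx⟩
      rw [hinf] at hx1
      exact Subtype.ext hx1
    have hsurj : Function.Surjective g' := by
      intro m
      obtain ⟨e, he⟩ := hg m
      have : e ∈ N ⊔ LinearMap.range f := by rw [hsup]; trivial
      obtain ⟨n, hn, k, hk, hnk⟩ := Submodule.mem_sup.mp this
      rw [hexact] at hk
      refine ⟨⟨n, hn⟩, ?_⟩
      have : g e = g n + g k := by rw [← hnk, map_add]
      simp only [hg', LinearMap.comp_apply, Submodule.subtype_apply]
      rw [← he, this, LinearMap.mem_ker.mp hk, add_zero]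
    let e := LinearEquiv.ofBijective g' ⟨hinj, hsurj⟩
    apply hnonsplit
    refine ⟨N.subtype.comp e.symm.toLinearMap, ?_⟩
    ext m
    simp only [LinearMap.comp_apply, LinearMap.id_apply, Submodule.subtype_apply]
    have : g' (e.symm m) = m := e.apply_symm_apply m
    simpa [hg'] using this
  -- the candidate
  refine ⟨Submodule.comap g N₀, ?_, ?_⟩
  · constructor
    · intro htop
      apply hN₀.1
      rw [eq_top_iff]
      intro m _
      obtain ⟨e, he⟩ := hg m
      have : e ∈ Submodule.comap g N₀ := by rw [htop]; trivial
      rwa [Submodule.mem_comap, he] at this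
    · intro K hK
      have hmap : Submodule.map g K = ⊤ := by
        apply hN₀.2
        have h1 : Submodule.map g (Submodule.comap g N₀) = N₀ :=
          Submodule.map_comap_eq_of_surjective hg N₀
        rcases lt_or_eq_of_le (h1 ▸ Submodule.map_mono hK.le) with h | h
        · exact h
        · exfalso
          have : K ≤ Submodule.comap g N₀ := by
            intro x hx
            rw [Submodule.mem_comap, h]
            exact ⟨x, hx, rfl⟩
          exact absurd (le_antisymm this hK.le) hK.ne'
      have hker : LinearMap.ker g ≤ K := le_trans (fun x hx => Submodule.mem_comap.mpr
        (by rw [LinearMap.mem_ker.mp hx]; exact N₀.zero_mem)) hK.le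
      rw [eq_top_iff]
      intro x _
      have : x ∈ Submodule.comap g (Submodule.map g K) := by rw [hmap]; trivial
      rw [Submodule.comap_map_eq, sup_eq_left.mpr hker] at this
      exact this
  · -- uniqueness
    intro N hN
    have hker : LinearMap.ker g ≤ N := key N hN
    have hNeq : Submodule.comap g (Submodule.map g N) = N := by
      rw [Submodule.comap_map_eq, sup_eq_left.mpr hker]
    have hco : IsCoatom (Submodule.map g N) := by
      constructor
      · intro htop
        apply hN.1
        rw [← hNeq, htop, Submodule.comap_top]
      · intro Q hQ
        have h2 : N < Submodule.comap g Q := by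
          rw [← hNeq]
          refine lt_of_le_of_ne (Submodule.comap_mono hQ.le) ?_
          intro h
          apply hQ.ne'
          have := congrArg (Submodule.map g) h
          rw [Submodule.map_comap_eq_of_surjective hg,
            Submodule.map_comap_eq_of_surjective hg] at this
          exact this.symm
        have := hN.2 _ h2
        rw [← Submodule.map_comap_eq_of_surjective hg Q, this, Submodule.map_top,
          LinearMap.range_eq_top.mpr hg]
    rw [← hNeq, huniq _ hco]
end

section
/- Let n ≥ 2 and 0 ≤ i ≤ n-2. There exists λ ∈ ℤⁿ such that: (1) (λ+ρ)₁ = 0 and (λ+ρ)₂ = 1, where ρ = (n-1,...,1,0); (2) λ_{k+1} - λ_k > 1 for all 2 ≤ k ≤ n-1; (3) λ is anti-dominant, i.e., (λ+ρ)ₖ - (λ+ρ)ₗ ∉ ℤ_{>0} for all 1 ≤ k < l ≤ n; and (4) λ ~ ∂^i, where ~ is the equivalence relation on ℤⁿ generated by the dot action of Sₙ (w·μ = w(μ+ρ)-ρ) and μ ~ μ ± 2eₖ, and ∂^i = (i, i-1, ..., 1, 0, ..., 0). -/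
/-- The shifted Weyl vector `ρ = (n-1, n-2, ..., 1, 0)` (0-based indexing). -/
def rhoVec (n : ℕ) : Fin n → ℤ := fun i => (n : ℤ) - 1 - (i : ℤ)

/-- The dot action of `Sₙ` on `ℤⁿ`: `w·λ = w(λ+ρ) - ρ`. -/
def dotAct {n : ℕ} (w : Equiv.Perm (Fin n)) (l : Fin n → ℤ) : Fin n → ℤ :=
  fun i => l (w⁻¹ i) + rhoVec n (w⁻¹ i) - rhoVec n i

/-- One step of the equivalence relation `~`. -/
def linkStep {n : ℕ} (l m : Fin n → ℤ) : Prop :=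
  (∃ w : Equiv.Perm (Fin n), m = dotAct w l) ∨
  (∃ k : Fin n, m = l + 2 • Pi.single k 1 ∨ m = l - 2 • Pi.single k 1)

/-- The equivalence relation `~` generated by the dot action and `λ ± 2eₖ`. -/
def linked {n : ℕ} (l m : Fin n → ℤ) : Prop := Relation.EqvGen linkStep l m

/-- `∂^i = (i, i-1, ..., 1, 0, ..., 0)` (0-based: `(∂^i)ₖ = i - k` for
`k < i` and `0` otherwise). -/
def partialWt (n i : ℕ) : Fin n → ℤ :=
  fun k => if (k : ℕ) < i then (i : ℤ) - (k : ℤ) else 0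

lemma single_app {n : ℕ} (k j : Fin n) :
    (2 • Pi.single k 1 : Fin n → ℤ) j = if j = k then 2 else 0 := by
  simp [Pi.single_apply]

lemma linked_shift {n : ℕ} (l : Fin n → ℤ) (k : Fin n) (d : ℤ) :
    linked l (fun j => l j + if j = k then 2 * d else 0) := by
  induction d using Int.induction_on with
  | zero =>
    have : (fun j => l j + if j = k then 2 * (0:ℤ) else 0) = l := by
      funext j; split <;> ring
    rw [this]; exact Relation.EqvGen.refl l
  | succ d ih =>
    refine Relation.EqvGen.trans _ _ _ ih (Relation.EqvGen.rel _ _ (Or.inr ⟨k, Or.inl ?_⟩))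
    funext j
    have := single_app k j
    simp only [Pi.add_apply, this]
    split <;> ring
  | pred d ih =>
    refine Relation.EqvGen.trans _ _ _ ih (Relation.EqvGen.rel _ _ (Or.inr ⟨k, Or.inr ?_⟩))
    funext j
    have := single_app k j
    simp only [Pi.sub_apply, this]
    split <;> ring

lemma linked_of_even_diff {n : ℕ} (l m : Fin n → ℤ) (h : ∀ j, (2:ℤ) ∣ (m j - l j)) :
    linked l m := by
  have aux : ∀ s : Finset (Fin n), linked l (fun j => if j ∈ s then m j else l j) := by
    intro s
    induction s using Finset.induction_on with
    | empty => simp; exact Relation.EqvGen.refl l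
    | @insert k s hk ih =>
      obtain ⟨d, hd⟩ := h k
      refine Relation.EqvGen.trans _ _ _ ih ?_
      have heq : (fun j => if j ∈ insert k s then m j else l j)
          = (fun j => (if j ∈ s then m j else l j) + if j = k then 2 * d else 0) := by
        funext j
        by_cases hj : j = k
        · subst hj; simp [hk]; omega
        · simp [hj, Finset.mem_insert]
      rw [heq]
      exact linked_shift _ k d
  have := aux Finset.univ
  simpa using this

lemma linked_of_parity {n : ℕ} (l m : Fin n → ℤ) (σ : Equiv.Perm (Fin n))
    (h : ∀ j, (m j + rhoVec n j) % 2 = (l (σ j) + rhoVec n (σ j)) % 2) :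
    linked l m := by
  refine Relation.EqvGen.trans _ (dotAct σ⁻¹ l) _
    (Relation.EqvGen.rel _ _ (Or.inl ⟨σ⁻¹, rfl⟩)) ?_
  apply linked_of_even_diff
  intro j
  have hj := h j
  have hd : dotAct σ⁻¹ l j = l (σ j) + rhoVec n (σ j) - rhoVec n j := by
    simp [dotAct]
  rw [hd]
  omega

lemma exists_perm_of_card_eq {α : Type*} [Fintype α] (p q : α → Prop)
    [DecidablePred p] [DecidablePred q]
    (h : (Finset.univ.filter p).card = (Finset.univ.filter q).card) :
    ∃ σ : Equiv.Perm α, ∀ j, p j ↔ q (σ j) := by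
  have h1 : Fintype.card {x // p x} = Fintype.card {x // q x} := by
    simpa [Fintype.card_subtype] using h
  have h2 : Fintype.card {x // ¬ p x} = Fintype.card {x // ¬ q x} := by
    rw [Fintype.card_subtype_compl, Fintype.card_subtype_compl, h1]
  let e1 := Fintype.equivOfCardEq h1
  let e2 := Fintype.equivOfCardEq h2
  refine ⟨(Equiv.sumCompl p).symm.trans ((e1.sumCongr e2).trans (Equiv.sumCompl q)), fun j => ?_⟩
  by_cases hp : p j
  · simp only [Equiv.trans_apply, Equiv.sumCompl_symm_apply_of_pos hp,
      Equiv.sumCongr_apply, Sum.map_inl, Equiv.sumCompl_apply_inl]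
    exact ⟨fun _ => (e1 ⟨j, hp⟩).2, fun _ => hp⟩
  · simp only [Equiv.trans_apply, Equiv.sumCompl_symm_apply_of_neg hp,
      Equiv.sumCongr_apply, Sum.map_inr, Equiv.sumCompl_apply_inr]
    exact ⟨fun hpj => absurd hpj hp, fun hq => absurd hq (e2 ⟨j, hp⟩).2⟩

def nuVec (n O : ℕ) : Fin n → ℤ :=
  fun k => if (k:ℕ) = 0 then 0 else if (k:ℕ) ≤ O then 2*((k:ℕ):ℤ) - 1 else 2*((k:ℕ):ℤ) - 2

lemma nu_parity {n O : ℕ} (k : Fin n) : nuVec n O k % 2 = 1 ↔ (1 ≤ (k:ℕ) ∧ (k:ℕ) ≤ O) := by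
  unfold nuVec; split_ifs with h1 h2 <;> omega

lemma nu_card {n O : ℕ} (hn : 0 < n) (hO : O < n) :
    (Finset.univ.filter (fun k : Fin n => nuVec n O k % 2 = 1)).card = O := by
  have : (Finset.univ.filter (fun k : Fin n => nuVec n O k % 2 = 1))
      = Finset.Ioc (⟨0, hn⟩ : Fin n) ⟨O, hO⟩ := by
    ext k
    simp [Finset.mem_Ioc, nu_parity, Fin.lt_def, Fin.le_def]
    omega
  rw [this, Fin.card_Ioc]
  simp

/-- for `n ≥ 2` and `0 ≤ i ≤ n-2` there is `λ ∈ ℤⁿ` with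
`(λ+ρ)₁ = 0`, `(λ+ρ)₂ = 1`, `λ_{k+1} - λ_k > 1` for `2 ≤ k ≤ n-1`, `λ`
anti-dominant, and `λ ~ ∂^i`. -/
theorem exists_antidominant_in_atypical_block {n : ℕ} (hn : 2 ≤ n)
    (i : ℕ) (hi : i ≤ n - 2) :
    ∃ l : Fin n → ℤ,
      (l ⟨0, by omega⟩ + rhoVec n ⟨0, by omega⟩ = 0) ∧
      (l ⟨1, by omega⟩ + rhoVec n ⟨1, by omega⟩ = 1) ∧
      (∀ k : Fin n, 1 ≤ (k : ℕ) → ∀ h : (k : ℕ) + 1 < n,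
        1 < l ⟨(k : ℕ) + 1, h⟩ - l k) ∧
      (∀ k m : Fin n, k < m → ¬ 0 < (l k + rhoVec n k) - (l m + rhoVec n m)) ∧
      linked l (partialWt n i) := by
  have hin : i + 2 ≤ n := by omega
  set p : Fin n → Prop := fun j => (partialWt n i j + rhoVec n j) % 2 = 1 with hp
  set O := (Finset.univ.filter p).card with hO
  have va : partialWt n i ⟨i, by omega⟩ + rhoVec n ⟨i, by omega⟩ = (n:ℤ) - 1 - i := by
    simp [partialWt, rhoVec]
  have vb : partialWt n i ⟨i+1, by omega⟩ + rhoVec n ⟨i+1, by omega⟩ = (n:ℤ) - 2 - i := by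
    simp [partialWt, rhoVec]
    push_cast
    ring
  have hO1 : 1 ≤ O := by
    rcases Int.emod_two_eq ((n:ℤ) - 1 - i) with h | h
    · refine Finset.card_pos.mpr ⟨⟨i+1, by omega⟩, Finset.mem_filter.mpr ⟨Finset.mem_univ _, ?_⟩⟩
      simp only [hp]; rw [vb]; omega
    · refine Finset.card_pos.mpr ⟨⟨i, by omega⟩, Finset.mem_filter.mpr ⟨Finset.mem_univ _, ?_⟩⟩
      simp only [hp]; rw [va]; omega
  have hOn : O < n := by
    have hss : Finset.univ.filter p ⊂ Finset.univ := by
      rw [Finset.filter_ssubset]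
      rcases Int.emod_two_eq ((n:ℤ) - 1 - i) with h | h
      · exact ⟨⟨i, by omega⟩, Finset.mem_univ _, by simp only [hp]; rw [va]; omega⟩
      · exact ⟨⟨i+1, by omega⟩, Finset.mem_univ _, by simp only [hp]; rw [vb]; omega⟩
    have := Finset.card_lt_card hss
    simpa using this
  obtain ⟨σ, hσ⟩ := exists_perm_of_card_eq p (fun k : Fin n => nuVec n O k % 2 = 1)
    (by rw [← hO, nu_card (by omega) hOn])
  refine ⟨fun k => nuVec n O k - rhoVec n k, ?_, ?_, ?_, ?_, ?_⟩
  · simp [nuVec]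
  · have h1 : ((⟨1, by omega⟩ : Fin n) : ℕ) = 1 := rfl
    simp only [nuVec, h1]
    norm_num [hO1]
  · intro k hk h
    have hv : ((⟨(k:ℕ)+1, h⟩ : Fin n) : ℕ) = (k:ℕ)+1 := rfl
    simp only [nuVec, rhoVec, hv]
    push_cast
    split_ifs <;> omega
  · intro k m hkm
    have hkm' : (k:ℕ) < (m:ℕ) := hkm
    simp only [nuVec, rhoVec]
    push_cast
    split_ifs <;> omega
  · refine linked_of_parity _ _ σ ?_
    intro j
    have h1 := hσ j
    simp only [hp] at h1
    have h2 : (fun k => nuVec n O k - rhoVec n k) (σ j) + rhoVec n (σ j) = nuVec n O (σ j) := by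
      ring
    rw [h2]
    rcases Int.emod_two_eq (partialWt n i j + rhoVec n j) with h | h <;>
      rcases Int.emod_two_eq (nuVec n O (σ j)) with h' | h' <;> omega
end
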